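/- Let (E,w,d) be an ultra triple, r ≥ 0, and let C be a finite subset of E with |C| = t − 1 where t > r. Let x, y ∉ C be distinct. Color an index j 'red' if both d(x,c_j) > d(x,y) and d(y,c_j) > d(x,y); for red j one has d(x,c_j) = d(y,c_j). If fewer than t − r indices are red, then dist_r(C ∪ {x}, y) = dist_r(C, y) + d(x,y) and dist_r(C ∪ {y}, x) = dist_r(C, x) + d(x,y). -/

import Mathlib

open Finset

noncomputable def distR {E : Type*} [DecidableEq E] (d : E → E → ℝ) (r : ℕ)
    (C : Finset E) (v : E) : ℝ :=
  if C.card ≤ r then 0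
  else sSup {s : ℝ | ∃ A ⊆ C, A.card = C.card - r ∧ s = ∑ x ∈ A, d v x}

noncomputable def perList {E : Type*} [DecidableEq E] (w : E → ℝ) (d : E → E → ℝ)
    (r : ℕ) : List E → ℝ
  | [] => 0
  | a :: l => perList w d r l + w a + distR d r l.toFinset a

noncomputable def perR {E : Type*} [DecidableEq E] (w : E → ℝ) (d : E → E → ℝ)
    (r : ℕ) (A : Finset E) : ℝ := perList w d r A.toList

/-- `b` is a projection of `c` onto the finite set `A`. -/
def IsProj {E : Type*} [DecidableEq E] (d : E → E → ℝ) (A : Finset E) (c b : E) : Prop :=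
  (c ∈ A ∧ b = c) ∨ (c ∉ A ∧ b ∈ A ∧ ∀ x ∈ A, d c b ≤ d c x)

/-- `v` is a sequential projection of the ordered set `c` (of length `k`) onto `A`. -/
def IsSeqProj {E : Type*} [DecidableEq E] (d : E → E → ℝ) (A : Finset E)
    (k : ℕ) (c v : ℕ → E) : Prop :=
  ∀ i < k, IsProj d (A \ (Finset.range i).image v) (c i) (v i)

/-- `c` is a greedy `r`-removed `m`-permutation of `C`. -/
def IsGreedy {E : Type*} [DecidableEq E] (w : E → ℝ) (d : E → E → ℝ) (r : ℕ)
    (C : Finset E) (m : ℕ) (c : ℕ → E) : Prop :=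
  (∀ i < m, c i ∈ C) ∧ (∀ i < m, ∀ j < m, c i = c j → i = j) ∧
  ∀ i < m, ∀ x ∈ C, x ∉ (Finset.range i).image c →
    perR w d r (insert x ((Finset.range i).image c)) ≤
      perR w d r (insert (c i) ((Finset.range i).image c))

noncomputable def distF {E : Type*} [DecidableEq E] (d : E → E → ℝ)
    (f : ℕ → ℝ → ℝ) (C : Finset E) (x : E) : ℝ :=
  let l := (C.toList.map (fun c => d x c)).insertionSort (· ≤ ·)
  ∑ i ∈ Finset.range l.length, f (i + 1) (l.getD i 0)

/-!
Adding `x` to `C` raises the number of summed distances from `|C| - r` to `|C| - r + 1`.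
Extending an optimal subset of `C` by `x` shows `dist_r(C ∪ {x}, y) ≥ dist_r(C, y) + d(y,x)`.
Conversely, a subset `A` of `C ∪ {x}` of size `|C| - r + 1` either contains `x`, or it is too
large to consist of points `c` with `d(y,c) > d(y,x)`; in both cases removing a point `c ∈ A` with
`d(y,c) ≤ d(y,x)` leaves a subset of `C`. By the ultrametric inequality every `c` with
`d(y,c) > d(y,x)` is red, so there are fewer than `t - r` of them.
-/

lemma distR_eq_sup' {E : Type*} [DecidableEq E] (d : E → E → ℝ) (r : ℕ) (C : Finset E) (v : E)
    {n : ℕ} (hn : C.card - r = n) :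
    distR d r C v = (C.powersetCard n).sup' (powersetCard_nonempty.2 (hn ▸ Nat.sub_le _ _))
      (fun A => ∑ a ∈ A, d v a) := by
  subst hn
  unfold distR
  split_ifs with h
  · simp [Nat.sub_eq_zero_of_le h]
  · rw [sup'_eq_csSup_image]
    congr 1
    ext s
    simp [mem_powersetCard, eq_comm, and_assoc]

lemma distR_insert_eq_add {E : Type*} [DecidableEq E] (d : E → E → ℝ) (r : ℕ) (C : Finset E)
    {x y : E} (hx : x ∉ C) (hfar : (C.filter fun c => d y x < d y c).card + r ≤ C.card) :
    distR d r (insert x C) y = distR d r C y + d y x := by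
  have hcard : (insert x C).card - r = C.card - r + 1 := by
    rw [card_insert_of_notMem hx]; omega
  rw [distR_eq_sup' d r (insert x C) y hcard, distR_eq_sup' d r C y rfl]
  apply le_antisymm
  · refine sup'_le _ _ fun A hA => ?_
    rw [mem_powersetCard] at hA
    obtain ⟨c, hcA, hAc, hc⟩ : ∃ c ∈ A, A.erase c ⊆ C ∧ d y c ≤ d y x := by
      by_cases hxA : x ∈ A
      · exact ⟨x, hxA, fun a ha => (mem_insert.1 (hA.1 (mem_of_mem_erase ha))).resolve_left
          (ne_of_mem_erase ha), le_rfl⟩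
      · have hAC : A ⊆ C := fun a ha => (mem_insert.1 (hA.1 ha)).resolve_left
          (fun h => hxA (h ▸ ha))
        obtain ⟨c, hcA, hc⟩ : ∃ c ∈ A, ¬ d y x < d y c := by
          by_contra! hall
          have := card_le_card fun a ha => mem_filter.2 ⟨hAC ha, hall a ha⟩
          omega
        exact ⟨c, hcA, (erase_subset c A).trans hAC, not_lt.1 hc⟩
    have hAc_mem : A.erase c ∈ C.powersetCard (C.card - r) :=
      mem_powersetCard.2 ⟨hAc, by rw [card_erase_of_mem hcA, hA.2]; rfl⟩
    rw [← sum_erase_add A _ hcA]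
    exact add_le_add (le_sup' (fun B => ∑ a ∈ B, d y a) hAc_mem) hc
  · obtain ⟨B, hB, hBmax⟩ := exists_mem_eq_sup' (powersetCard_nonempty.2 (Nat.sub_le _ _))
      (fun B => ∑ a ∈ B, d y a)
    rw [mem_powersetCard] at hB
    have hxB : x ∉ B := fun h => hx (hB.1 h)
    have hinsert : insert x B ∈ (insert x C).powersetCard (C.card - r + 1) :=
      mem_powersetCard.2 ⟨insert_subset_insert x hB.1, by rw [card_insert_of_notMem hxB, hB.2]⟩
    rw [hBmax, add_comm, ← sum_insert hxB]
    exact le_sup' (fun B => ∑ a ∈ B, d y a) hinsert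

lemma lt_dist_of_lt_dist {E : Type*} {d : E → E → ℝ}
    (hsymm : ∀ a b : E, a ≠ b → d a b = d b a)
    (hultra : ∀ a b c : E, a ≠ b → a ≠ c → b ≠ c → d a b ≤ max (d a c) (d b c))
    {a b c : E} (hab : a ≠ b) (hac : a ≠ c) (hbc : b ≠ c) (h : d a b < d a c) :
    d a b < d b c := by
  have := hultra a c b hac hab hbc.symm
  rw [hsymm c b hbc.symm] at this
  exact h.trans_le ((le_max_iff.1 this).resolve_left h.not_ge)

theorem stmt16_general {E : Type*} [DecidableEq E] (d : E → E → ℝ)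
    (hsymm : ∀ a b : E, a ≠ b → d a b = d b a)
    (hultra : ∀ a b c : E, a ≠ b → a ≠ c → b ≠ c → d a b ≤ max (d a c) (d b c))
    (r t : ℕ) (C : Finset E) (hC : C.card = t - 1)
    (x y : E) (hx : x ∉ C) (hy : y ∉ C) (hxy : x ≠ y)
    [DecidablePred fun cj => d x y < d x cj ∧ d x y < d y cj]
    (hred : (C.filter (fun cj => d x y < d x cj ∧ d x y < d y cj)).card < t - r) :
    distR d r (insert x C) y = distR d r C y + d x y ∧
      distR d r (insert y C) x = distR d r C x + d x y := by
  have hyx : d y x = d x y := hsymm y x hxy.symm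
  have hne : ∀ c ∈ C, c ≠ x ∧ c ≠ y := fun c hc => ⟨fun h => hx (h ▸ hc), fun h => hy (h ▸ hc)⟩
  have hfar_y : (C.filter fun c => d y x < d y c).card + r ≤ C.card := by
    have hsub : C.filter (fun c => d y x < d y c) ⊆
        C.filter (fun cj => d x y < d x cj ∧ d x y < d y cj) := fun c hc => by
      obtain ⟨hcC, hc⟩ := mem_filter.1 hc
      have hxc := lt_dist_of_lt_dist hsymm hultra hxy.symm (hne c hcC).2.symm (hne c hcC).1.symm hc
      rw [hyx] at hc hxc
      exact mem_filter.2 ⟨hcC, hxc, hc⟩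
    have := card_le_card hsub
    omega
  have hfar_x : (C.filter fun c => d x y < d x c).card + r ≤ C.card := by
    have hsub : C.filter (fun c => d x y < d x c) ⊆
        C.filter (fun cj => d x y < d x cj ∧ d x y < d y cj) := fun c hc => by
      obtain ⟨hcC, hc⟩ := mem_filter.1 hc
      have hyc := lt_dist_of_lt_dist hsymm hultra hxy (hne c hcC).1.symm (hne c hcC).2.symm hc
      exact mem_filter.2 ⟨hcC, hc, hyc⟩
    have := card_le_card hsub
    omega
  exact ⟨by rw [distR_insert_eq_add d r C hx hfar_y, hyx],
    distR_insert_eq_add d r C hy hfar_x⟩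

theorem stmt16 {E : Type*} [DecidableEq E] (w : E → ℝ) (d : E → E → ℝ)
    (hsymm : ∀ a b : E, a ≠ b → d a b = d b a)
    (hultra : ∀ a b c : E, a ≠ b → a ≠ c → b ≠ c → d a b ≤ max (d a c) (d b c))
    (r t : ℕ) (hrt : r < t) (C : Finset E) (hC : C.card = t - 1)
    (x y : E) (hx : x ∉ C) (hy : y ∉ C) (hxy : x ≠ y)
    [DecidablePred fun cj => d x y < d x cj ∧ d x y < d y cj]
    (hred : (C.filter (fun cj => d x y < d x cj ∧ d x y < d y cj)).card < t - r) :
    distR d r (insert x C) y = distR d r C y + d x y ∧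
      distR d r (insert y C) x = distR d r C x + d x y :=
  stmt16_general d hsymm hultra r t C hC x y hx hy hxy hred
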